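/- arXiv:1807.01241 — 2 statements merged into one kernel-verified Lean document; each statement's English description precedes it below -/
import Mathlib

section
/- Let v_n be the positive first eigenfunction of -d²/dx² + (nx)² on (-1,1) with Dirichlet boundary conditions, normalized by v_n(0) = 1. Then there is a constant c > 0 such that ‖v_n‖²_{L²(-1,1)} ≥ c · n^(-1/2) for all n ≥ 1. -/
/-- `IsGrushinGroundState n lam v` : `v` is an eigenfunction of `-d²/dx² + (n x)²` on `(-1,1)`
with Dirichlet boundary conditions, positive on `(-1,1)`, associated with the smallest
eigenvalue `lam`. -/
def IsGrushinGroundState (n : ℕ) (lam : ℝ) (v : ℝ → ℝ) : Prop :=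
  ContDiff ℝ 2 v ∧ v (-1) = 0 ∧ v 1 = 0 ∧
    (∀ x ∈ Set.Ioo (-1 : ℝ) 1, 0 < v x) ∧
    (∀ x ∈ Set.Ioo (-1 : ℝ) 1,
      -(deriv (deriv v) x) + ((n : ℝ) * x) ^ 2 * v x = lam * v x) ∧
    (∀ μ : ℝ, (∃ w : ℝ → ℝ, ContDiff ℝ 2 w ∧ w (-1) = 0 ∧ w 1 = 0 ∧
        (∃ x ∈ Set.Ioo (-1 : ℝ) 1, w x ≠ 0) ∧
        ∀ x ∈ Set.Ioo (-1 : ℝ) 1,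
          -(deriv (deriv w) x) + ((n : ℝ) * x) ^ 2 * w x = μ * w x) → lam ≤ μ)

/-! The Gaussian `exp (-n x² / 2)` is a positive solution of `-w'' + (n x)² w = n w`, so comparing
Wronskians with it gives `λ_n ≥ n`. Hence `v_n'' = ((n x)² - λ_n) v_n ≤ 0` on `|x| ≤ n^{-1/2}`:
there `v_n` is concave, and since `v_n(0) = 1` and `v_n ≥ 0` it stays `≥ 1/2` on the interval
`|x| ≤ n^{-1/2} / 2` of length `n^{-1/2}`. -/

open Set Filter Topology MeasureTheory

lemma deriv_nonneg_of_eventually_le_right {f : ℝ → ℝ} {a : ℝ} (hf : DifferentiableAt ℝ f a)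
    (h : ∀ᶠ x in 𝓝[>] a, f a ≤ f x) : 0 ≤ deriv f a := by
  have hslope : Tendsto (slope f a) (𝓝[>] a) (𝓝 (deriv f a)) :=
    (hasDerivAt_iff_tendsto_slope.mp hf.hasDerivAt).mono_left
      (nhdsWithin_mono _ fun _ hx => ne_of_gt hx)
  refine ge_of_tendsto hslope ?_
  filter_upwards [h, self_mem_nhdsWithin] with x hfx hx
  rw [slope_def_field]
  exact div_nonneg (sub_nonneg.2 hfx) (sub_nonneg.2 (le_of_lt hx))

lemma deriv_nonpos_of_eventually_le_left {f : ℝ → ℝ} {b : ℝ} (hf : DifferentiableAt ℝ f b)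
    (h : ∀ᶠ x in 𝓝[<] b, f b ≤ f x) : deriv f b ≤ 0 := by
  have hslope : Tendsto (slope f b) (𝓝[<] b) (𝓝 (deriv f b)) :=
    (hasDerivAt_iff_tendsto_slope.mp hf.hasDerivAt).mono_left
      (nhdsWithin_mono _ fun _ hx => ne_of_lt hx)
  refine le_of_tendsto hslope ?_
  filter_upwards [h, self_mem_nhdsWithin] with x hfx hx
  rw [slope_def_field]
  exact div_nonpos_of_nonneg_of_nonpos (sub_nonneg.2 hfx) (sub_nonpos.2 (le_of_lt hx))

theorem le_dirichlet_eigenvalue_of_pos_solution {V v w : ℝ → ℝ} {a b lam μ : ℝ} (hab : a < b)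
    (hv : ContDiff ℝ 2 v) (hw : ContDiff ℝ 2 w) (hva : v a = 0) (hvb : v b = 0)
    (hv_pos : ∀ x ∈ Ioo a b, 0 < v x) (hw_pos : ∀ x ∈ Icc a b, 0 < w x)
    (hv_eq : ∀ x ∈ Ioo a b, -deriv (deriv v) x + V x * v x = lam * v x)
    (hw_eq : ∀ x ∈ Ioo a b, -deriv (deriv w) x + V x * w x = μ * w x) :
    μ ≤ lam := by
  by_contra! hlt
  have hv₁ := hv.differentiable two_ne_zero
  have hv₂ := hv.differentiable_deriv_two
  have hw₁ := hw.differentiable two_ne_zero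
  have hw₂ := hw.differentiable_deriv_two
  -- The Wronskian `W` has `W' = (μ - lam) v w > 0`, while `W a = v' a w a ≥ 0 ≥ v' b w b = W b`.
  set W : ℝ → ℝ := fun x => deriv v x * w x - v x * deriv w x
  have hW_mono : StrictMonoOn W (Icc a b) := by
    refine strictMonoOn_of_deriv_pos (convex_Icc a b)
      ((hv₂.continuous.mul hw₁.continuous).sub (hv₁.continuous.mul hw₂.continuous)).continuousOn
      fun x hx => ?_
    rw [interior_Icc] at hx
    have hW' : HasDerivAt W ((μ - lam) * (v x * w x)) x := by
      refine (((hv₂ x).hasDerivAt.mul (hw₁ x).hasDerivAt).sub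
        ((hv₁ x).hasDerivAt.mul (hw₂ x).hasDerivAt)).congr_deriv ?_
      linear_combination v x * hw_eq x hx - w x * hv_eq x hx
    rw [hW'.deriv]
    have := hv_pos x hx
    have := hw_pos x (Ioo_subset_Icc_self hx)
    have : 0 < μ - lam := by linarith
    positivity
  have hWa : 0 ≤ W a := by
    have : 0 ≤ deriv v a := deriv_nonneg_of_eventually_le_right (hv₁ a) <| by
      filter_upwards [Ioo_mem_nhdsGT hab] with x hx
      exact hva ▸ (hv_pos x hx).le
    simpa [W, hva] using mul_nonneg this (hw_pos a (left_mem_Icc.2 hab.le)).le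
  have hWb : W b ≤ 0 := by
    have : deriv v b ≤ 0 := deriv_nonpos_of_eventually_le_left (hv₁ b) <| by
      filter_upwards [Ioo_mem_nhdsLT hab] with x hx
      exact hvb ▸ (hv_pos x hx).le
    simpa [W, hvb] using
      mul_nonpos_of_nonpos_of_nonneg this (hw_pos b (right_mem_Icc.2 hab.le)).le
  linarith [hW_mono (left_mem_Icc.2 hab.le) (right_mem_Icc.2 hab.le) hab]

lemma hasDerivAt_gaussian (m x : ℝ) :
    HasDerivAt (fun x => Real.exp (-(m * x ^ 2) / 2))
      (-(m * x) * Real.exp (-(m * x ^ 2) / 2)) x := by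
  have h : HasDerivAt (fun x => -(m * x ^ 2) / 2) (-(m * x)) x := by
    refine (((hasDerivAt_pow 2 x).const_mul m).fun_neg.div_const 2).congr_deriv ?_
    push_cast; ring
  exact h.exp.congr_deriv (mul_comm _ _)

lemma harmonic_oscillator_gaussian_eq (m x : ℝ) :
    -deriv (deriv fun x => Real.exp (-(m * x ^ 2) / 2)) x
      + (m * x) ^ 2 * Real.exp (-(m * x ^ 2) / 2) = m * Real.exp (-(m * x ^ 2) / 2) := by
  have h1 : deriv (fun x => Real.exp (-(m * x ^ 2) / 2)) =
      fun x => -(m * x) * Real.exp (-(m * x ^ 2) / 2) :=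
    funext fun x => (hasDerivAt_gaussian m x).deriv
  have h2 : HasDerivAt (fun x => -(m * x)) (-m) x := by
    simpa using ((hasDerivAt_id x).const_mul m).fun_neg
  rw [h1, (h2.fun_mul (hasDerivAt_gaussian m x)).deriv]
  ring

theorem le_dirichlet_eigenvalue_harmonic {v : ℝ → ℝ} {a b m lam : ℝ} (hab : a < b)
    (hv : ContDiff ℝ 2 v) (hva : v a = 0) (hvb : v b = 0) (hv_pos : ∀ x ∈ Ioo a b, 0 < v x)
    (hv_eq : ∀ x ∈ Ioo a b, -deriv (deriv v) x + (m * x) ^ 2 * v x = lam * v x) :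
    m ≤ lam :=
  le_dirichlet_eigenvalue_of_pos_solution (V := fun x => (m * x) ^ 2) hab hv (by fun_prop) hva hvb
    hv_pos (fun x _ => Real.exp_pos _) hv_eq (fun x _ => harmonic_oscillator_gaussian_eq m x)

lemma concaveOn_of_nonneg_of_potential_le {V v : ℝ → ℝ} {lam : ℝ} {D : Set ℝ} (hD : Convex ℝ D)
    (hv : ContDiff ℝ 2 v) (hv_nonneg : ∀ x ∈ interior D, 0 ≤ v x)
    (hV : ∀ x ∈ interior D, V x ≤ lam)
    (hv_eq : ∀ x ∈ interior D, -deriv (deriv v) x + V x * v x = lam * v x) :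
    ConcaveOn ℝ D v := by
  have hv₁ := hv.differentiable two_ne_zero
  have hv₂ := hv.differentiable_deriv_two
  refine concaveOn_of_deriv2_nonpos hD hv₁.continuous.continuousOn hv₁.differentiableOn
    hv₂.differentiableOn fun x hx => ?_
  show deriv (deriv v) x ≤ 0
  nlinarith [mul_nonneg (sub_nonneg.2 (hV x hx)) (hv_nonneg x hx), hv_eq x hx]

lemma ConcaveOn.half_le_of_mem_Icc {f : ℝ → ℝ} {c r x : ℝ}
    (hf : ConcaveOn ℝ (Icc (c - r) (c + r)) f) (hl : 0 ≤ f (c - r)) (hr : 0 ≤ f (c + r))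
    (hx : x ∈ Icc (c - r / 2) (c + r / 2)) : f c / 2 ≤ f x := by
  have hr0 : 0 ≤ r := by linarith [hx.1.trans hx.2]
  have hc : c ∈ Icc (c - r) (c + r) := ⟨by linarith, by linarith⟩
  have hmid : ∀ y ∈ Icc (c - r) (c + r), 0 ≤ f y → f c / 2 ≤ f ((c + y) / 2) := by
    intro y hy hfy
    have := hf.2 hc hy (by norm_num : (0 : ℝ) ≤ 1 / 2) (by norm_num : (0 : ℝ) ≤ 1 / 2)
      (by norm_num)
    rw [smul_eq_mul, smul_eq_mul, smul_eq_mul, smul_eq_mul,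
      show 1 / 2 * c + 1 / 2 * y = (c + y) / 2 by ring] at this
    linarith
  have hl' := hmid (c - r) ⟨by linarith, by linarith⟩ hl
  have hr' := hmid (c + r) ⟨by linarith, by linarith⟩ hr
  have hmin := hf.min_le_of_mem_Icc (x := (c + (c - r)) / 2) (y := (c + (c + r)) / 2) (z := x)
    ⟨by linarith, by linarith⟩ ⟨by linarith, by linarith⟩ ⟨by linarith [hx.1], by linarith [hx.2]⟩
  exact (le_min hl' hr').trans hmin

lemma mul_sub_le_setIntegral_of_le {f : ℝ → ℝ} {a b c d k : ℝ}
    (hf : ContinuousOn f (Icc c d)) (hf0 : ∀ x ∈ Ioo c d, 0 ≤ f x)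
    (hsub : Ioo a b ⊆ Ioo c d) (hab : a ≤ b) (hk : ∀ x ∈ Ioo a b, k ≤ f x) :
    k * (b - a) ≤ ∫ x in Ioo c d, f x := by
  have hint : IntegrableOn f (Ioo c d) :=
    (hf.integrableOn_compact isCompact_Icc).mono_set Ioo_subset_Icc_self
  calc k * (b - a) = k * volume.real (Ioo a b) := by rw [Real.volume_real_Ioo_of_le hab]
    _ ≤ ∫ x in Ioo a b, f x :=
        setIntegral_ge_of_const_le_real measurableSet_Ioo measure_Ioo_lt_top.ne hk
          (hint.mono_set hsub)
    _ ≤ ∫ x in Ioo c d, f x :=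
        setIntegral_mono_set hint ((ae_restrict_iff' measurableSet_Ioo).2 (ae_of_all _ hf0))
          hsub.eventuallyLE

/-- If `v_n` is the positive first Dirichlet eigenfunction of `-d²/dx² + (nx)²` on `(-1,1)`
normalized by `v_n(0) = 1`, then `‖v_n‖²_{L²(-1,1)} ≥ c n^{-1/2}` for some `c > 0`. -/
theorem grushin_ground_state_l2_lower_bound (lam : ℕ → ℝ) (v : ℕ → ℝ → ℝ)
    (h : ∀ n : ℕ, 1 ≤ n → IsGrushinGroundState n (lam n) (v n))
    (h_norm : ∀ n : ℕ, 1 ≤ n → v n 0 = 1) :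
    ∃ c : ℝ, 0 < c ∧ ∀ n : ℕ, 1 ≤ n →
      c * (n : ℝ) ^ (-(1 : ℝ) / 2) ≤ ∫ x in Set.Ioo (-1 : ℝ) 1, (v n x) ^ 2 := by
  refine ⟨1 / 4, by norm_num, fun n hn => ?_⟩
  obtain ⟨hv, hv_neg_one, hv_one, hv_pos, hv_eq, -⟩ := h n hn
  have hn0 : (0 : ℝ) < n := by exact_mod_cast hn
  have hlam : (n : ℝ) ≤ lam n :=
    le_dirichlet_eigenvalue_harmonic (by norm_num) hv hv_neg_one hv_one hv_pos hv_eq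
  set b := (√(n : ℝ))⁻¹ with hb
  have hb0 : 0 < b := by positivity
  have hb1 : b ≤ 1 := inv_le_one_of_one_le₀ (Real.one_le_sqrt.2 (by exact_mod_cast hn))
  have hnb : (n : ℝ) ^ 2 * b ^ 2 = n := by
    rw [hb, inv_pow, Real.sq_sqrt hn0.le]; field_simp
  have hv_nonneg : ∀ x ∈ Icc (-1 : ℝ) 1, 0 ≤ v n x := by
    intro x hx
    rcases eq_endpoints_or_mem_Ioo_of_mem_Icc hx with rfl | rfl | hx
    exacts [hv_neg_one.ge, hv_one.ge, (hv_pos x hx).le]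
  have hconc : ConcaveOn ℝ (Icc (0 - b) (0 + b)) (v n) := by
    rw [zero_sub, zero_add]
    refine concaveOn_of_nonneg_of_potential_le (V := fun x => ((n : ℝ) * x) ^ 2) (lam := lam n)
      (convex_Icc _ _) hv ?_ ?_ ?_ <;>
      intro x hx <;> rw [interior_Icc] at hx
    · exact hv_nonneg x ⟨by linarith [hx.1], by linarith [hx.2]⟩
    · nlinarith [sq_le_sq' hx.1.le hx.2.le]
    · exact hv_eq x ⟨by linarith [hx.1], by linarith [hx.2]⟩
  have hsq : ∀ x ∈ Ioo (-(b / 2)) (b / 2), 1 / 4 ≤ v n x ^ 2 := by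
    intro x hx
    have := hconc.half_le_of_mem_Icc (x := x) (hv_nonneg _ ⟨by linarith, by linarith⟩)
      (hv_nonneg _ ⟨by linarith, by linarith⟩) ⟨by linarith [hx.1], by linarith [hx.2]⟩
    rw [h_norm n hn] at this
    nlinarith
  have hint := mul_sub_le_setIntegral_of_le (f := fun x => v n x ^ 2)
    (hv.continuous.pow 2).continuousOn (fun x _ => sq_nonneg (v n x))
    (Ioo_subset_Ioo (by linarith : -1 ≤ -(b / 2)) (by linarith : b / 2 ≤ 1)) (by linarith) hsq
  rw [neg_div, Real.rpow_neg hn0.le, ← Real.sqrt_eq_rpow]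
  linarith
end

section
/- Let γ₁, γ₂ : [0,π] → (-1,1) be continuous with γ₁ < γ₂ pointwise, let a = max(max(γ₂⁻), max(γ₁⁺)), and assume a > 0. Then for every ε > 0 there exists y_ε ∈ (0,π) such that the open horizontal segment {(x, y_ε) : |x| < a - ε} is disjoint from the closure of ω = {(x,y) : γ₁(y) < x < γ₂(y)}. -/
open Real

lemma seg_avoid_aux (ω : Set (ℝ × ℝ)) (γ : ℝ → ℝ)
    (hγ : ContinuousOn γ (Set.Icc 0 π))
    (hsub : ∀ p : ℝ × ℝ, p ∈ ω → p.2 ∈ Set.Icc 0 π ∧ p.1 < γ p.2)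
    (y₀ : ℝ) (hy₀ : y₀ ∈ Set.Icc 0 π) (c : ℝ) (hγc : γ y₀ < c) :
    ∃ y ∈ Set.Ioo (0:ℝ) π, ∀ x : ℝ, c < x → (x, y) ∉ closure ω := by
  have hπ := pi_pos
  have hct := hγ.continuousWithinAt hy₀
  have hpre : γ ⁻¹' Set.Iio c ∈ nhdsWithin y₀ (Set.Icc 0 π) := hct (Iio_mem_nhds hγc)
  rw [Metric.mem_nhdsWithin_iff] at hpre
  obtain ⟨δ, hδ, hball⟩ := hpre
  set d := min (δ/4) (π/4) with hd
  have hd0 : 0 < d := lt_min (by linarith) (by positivity)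
  have hdδ : d ≤ δ/4 := min_le_left _ _
  have hdπ : d ≤ π/4 := min_le_right _ _
  set y := max d (min y₀ (π - d)) with hy
  have hy1 : d ≤ y := le_max_left _ _
  have hy2 : y ≤ π - d := max_le (by linarith) (min_le_right _ _)
  have hclose : |y - y₀| ≤ d := by
    rw [abs_le]
    constructor
    · have h1 : y₀ - d ≤ min y₀ (π - d) := le_min (by linarith) (by linarith [hy₀.2])
      linarith [le_max_right d (min y₀ (π - d))]
    · have h1 : min y₀ (π - d) ≤ y₀ := min_le_left _ _
      have h2 : y ≤ y₀ + d := max_le (by linarith [hy₀.1]) (by linarith)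
      linarith
  refine ⟨y, ⟨by linarith, by linarith⟩, fun x hx hmem => ?_⟩
  obtain ⟨p, hpU, hpω⟩ := _root_.mem_closure_iff.mp hmem {p : ℝ × ℝ | c < p.1 ∧ |p.2 - y| < d}
    ((isOpen_lt continuous_const continuous_fst).inter
      (isOpen_lt ((continuous_snd.sub continuous_const).abs) continuous_const))
    ⟨hx, by simpa using hd0⟩
  have hp2 : p.2 ∈ Set.Icc 0 π := (hsub p hpω).1
  have hball' : p.2 ∈ Metric.ball y₀ δ := by
    rw [Metric.mem_ball, Real.dist_eq]
    have h3 : |p.2 - y₀| ≤ |p.2 - y| + |y - y₀| := abs_sub_le _ _ _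
    linarith [hpU.2]
  have hlt' : γ p.2 < c := hball ⟨hball', hp2⟩
  linarith [(hsub p hpω).2, hpU.1]

/-- If `ω = {(x,y) : γ₁(y) < x < γ₂(y)}` and `a = max(max γ₂⁻, max γ₁⁺) > 0`, then for
every `ε > 0` there is `y_ε ∈ (0,π)` such that the open horizontal segment
`{(x, y_ε) : |x| < a - ε}` is disjoint from the closure of `ω`. -/
theorem horizontal_segment_avoids_closure (γ₁ γ₂ : ℝ → ℝ)
    (h₁ : ContinuousOn γ₁ (Set.Icc 0 π)) (h₂ : ContinuousOn γ₂ (Set.Icc 0 π))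
    (h₁mem : ∀ y ∈ Set.Icc (0 : ℝ) π, γ₁ y ∈ Set.Ioo (-1 : ℝ) 1)
    (h₂mem : ∀ y ∈ Set.Icc (0 : ℝ) π, γ₂ y ∈ Set.Ioo (-1 : ℝ) 1)
    (hlt : ∀ y ∈ Set.Icc (0 : ℝ) π, γ₁ y < γ₂ y)
    (a : ℝ)
    (ha : a = max (sSup ((fun y => max 0 (-γ₂ y)) '' Set.Icc 0 π))
               (sSup ((fun y => max 0 (γ₁ y)) '' Set.Icc 0 π)))
    (ha_pos : 0 < a)
    (ω : Set (ℝ × ℝ))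
    (hω : ω = {p : ℝ × ℝ | p.2 ∈ Set.Ioo (0 : ℝ) π ∧ γ₁ p.2 < p.1 ∧ p.1 < γ₂ p.2}) :
    ∀ ε : ℝ, 0 < ε → ∃ y ∈ Set.Ioo (0 : ℝ) π,
      ∀ x : ℝ, |x| < a - ε → (x, y) ∉ closure ω := by
  intro ε hε
  have hπ := pi_pos
  by_cases hεa : a - ε ≤ 0
  · exact ⟨π/2, ⟨by positivity, by linarith⟩,
      fun x hx => absurd hx (by simp only [not_lt]; linarith [abs_nonneg x])⟩
  push_neg at hεa
  have hicc : (Set.Icc (0:ℝ) π).Nonempty := ⟨0, le_refl 0, hπ.le⟩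
  have hmax : a - ε < max (sSup ((fun y => max 0 (-γ₂ y)) '' Set.Icc 0 π))
      (sSup ((fun y => max 0 (γ₁ y)) '' Set.Icc 0 π)) := by rw [← ha]; linarith
  rcases lt_max_iff.mp hmax with h | h
  · obtain ⟨b, hb, hab⟩ := exists_lt_of_lt_csSup (hicc.image _) h
    obtain ⟨y₀, hy₀, rfl⟩ := hb
    have hγ2 : γ₂ y₀ < ε - a := by
      rcases lt_max_iff.mp hab with h' | h' <;> linarith
    obtain ⟨y, hymem, hyav⟩ := seg_avoid_aux ω γ₂ h₂
      (fun p hp => by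
        rw [hω] at hp
        exact ⟨Set.Ioo_subset_Icc_self hp.1, hp.2.2⟩) y₀ hy₀ (ε - a) hγ2
    refine ⟨y, hymem, fun x hx => hyav x ?_⟩
    have := abs_lt.mp hx
    linarith [this.1]
  · obtain ⟨b, hb, hab⟩ := exists_lt_of_lt_csSup (hicc.image _) h
    obtain ⟨y₀, hy₀, rfl⟩ := hb
    have hγ1 : a - ε < γ₁ y₀ := by
      rcases lt_max_iff.mp hab with h' | h' <;> linarith
    obtain ⟨y, hymem, hyav⟩ := seg_avoid_aux ((fun p : ℝ × ℝ => (-p.1, p.2)) '' ω)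
      (fun t => -γ₁ t) h₁.neg
      (fun p hp => by
        obtain ⟨q, hq, rfl⟩ := hp
        rw [hω] at hq
        exact ⟨Set.Ioo_subset_Icc_self hq.1, by simpa using hq.2.1⟩)
      y₀ hy₀ (ε - a) (by simpa using by linarith : -γ₁ y₀ < ε - a)
    refine ⟨y, hymem, fun x hx hcl => ?_⟩
    have hcont : Continuous (fun p : ℝ × ℝ => (-p.1, p.2)) :=
      (continuous_fst.neg).prodMk continuous_snd
    have himg : ((-x, y) : ℝ × ℝ) ∈ closure ((fun p : ℝ × ℝ => (-p.1, p.2)) '' ω) :=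
      image_closure_subset_closure_image hcont ⟨(x, y), hcl, rfl⟩
    have := abs_lt.mp hx
    exact hyav (-x) (by linarith [this.2]) himg
end
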